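/- arXiv:1601.04383 — 7 statements merged into one kernel-verified Lean document; each statement's English description precedes it below -/
import Mathlib

section
/- Let A, B be complex numbers with A ≠ 0, n ≥ 2, and let q ≠ 1 be a complex number such that q = t_i/t_j for two distinct roots t_i, t_j of D(t) = 1 + Bt + At^n. Then (−1)^n B^n (1−q) q^{n−1} (1−q^{n−1})^{n−1} = (1−q^n)^n A. -/
/-!
Put `v = B t` and `u = A tⁿ` for the root `t = t_j`. The two root conditions `1 + v + u = 0` and
`1 + q v + qⁿ u = 0` form a linear system in `(v, u)` with determinant `qⁿ - q`, so Cramer's rule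
gives `v (qⁿ - q) = 1 - qⁿ` and `u (qⁿ - q) = q - 1`. Since `Bⁿ u = A vⁿ`, multiplying by
`(qⁿ - q)ⁿ` eliminates `t` and leaves `Bⁿ (q - 1) (qⁿ - q)ⁿ⁻¹ = (1 - qⁿ)ⁿ A`, which is the claim
after factoring `qⁿ - q = -q (1 - qⁿ⁻¹)`.
-/

section TrinomialRootRatio

variable {R : Type*} [CommRing R] {n : ℕ} {A B q t : R}

theorem linear_coeff_mul_root_eq (h₁ : 1 + B * t + A * t ^ n = 0)
    (h₂ : 1 + B * (q * t) + A * (q * t) ^ n = 0) :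
    B * t * (q ^ n - q) = 1 - q ^ n := by
  linear_combination q ^ n * h₁ - h₂

theorem leading_coeff_mul_root_pow_eq (h₁ : 1 + B * t + A * t ^ n = 0)
    (h₂ : 1 + B * (q * t) + A * (q * t) ^ n = 0) :
    A * t ^ n * (q ^ n - q) = q - 1 := by
  linear_combination h₂ - q * h₁

theorem pow_linear_coeff_mul_eq_of_root_ratio (hn : 1 ≤ n) (h₁ : 1 + B * t + A * t ^ n = 0)
    (h₂ : 1 + B * (q * t) + A * (q * t) ^ n = 0) :
    B ^ n * ((q - 1) * (q ^ n - q) ^ (n - 1)) = (1 - q ^ n) ^ n * A := by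
  obtain ⟨m, rfl⟩ : ∃ m, n = m + 1 := ⟨n - 1, by omega⟩
  calc B ^ (m + 1) * ((q - 1) * (q ^ (m + 1) - q) ^ (m + 1 - 1))
      = B ^ (m + 1) * (A * t ^ (m + 1) * (q ^ (m + 1) - q) * (q ^ (m + 1) - q) ^ m) := by
        rw [leading_coeff_mul_root_pow_eq h₁ h₂, Nat.add_sub_cancel]
    _ = (B * t * (q ^ (m + 1) - q)) ^ (m + 1) * A := by rw [mul_pow, mul_pow]; ring
    _ = (1 - q ^ (m + 1)) ^ (m + 1) * A := by rw [linear_coeff_mul_root_eq h₁ h₂]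

end TrinomialRootRatio

theorem stmt_5_general (n : ℕ) (hn : 2 ≤ n) (A B : ℂ) (q ti tj : ℂ)
    (hti : 1 + B * ti + A * ti ^ n = 0) (htj : 1 + B * tj + A * tj ^ n = 0)
    (hquot : ti = q * tj) :
    (-1) ^ n * B ^ n * (1 - q) * q ^ (n - 1) * (1 - q ^ (n - 1)) ^ (n - 1)
      = (1 - q ^ n) ^ n * A := by
  subst hquot
  obtain ⟨m, rfl⟩ : ∃ m, n = m + 1 := ⟨n - 1, by omega⟩
  have hsign : (q ^ (m + 1) - q) ^ m = (-1) ^ m * q ^ m * (1 - q ^ m) ^ m := by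
    rw [show q ^ (m + 1) - q = -q * (1 - q ^ m) by ring, mul_pow, neg_pow]
  rw [← pow_linear_coeff_mul_eq_of_root_ratio (by omega) htj hti, Nat.add_sub_cancel, hsign]
  ring

theorem stmt_5 (n : ℕ) (hn : 2 ≤ n) (A B : ℂ) (hA : A ≠ 0) (q ti tj : ℂ) (hq : q ≠ 1)
    (hti : 1 + B * ti + A * ti ^ n = 0) (htj : 1 + B * tj + A * tj ^ n = 0)
    (hquot : ti = q * tj) :
    (-1) ^ n * B ^ n * (1 - q) * q ^ (n - 1) * (1 - q ^ (n - 1)) ^ (n - 1)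
      = (1 - q ^ n) ^ n * A :=
  stmt_5_general n hn A B q ti tj hti htj hquot
end

section
/- Fix n ≥ 2 and let H_m(z) be defined by H_m(z) = (−1)^m B(z)^m for 0 ≤ m < n and H_m(z) = −B(z)H_{m−1}(z) − A(z)H_{m−n}(z) for m ≥ n, where A, B are complex polynomials of degrees a and b respectively. Write m = np + r with 0 ≤ r < n. Then deg H_m ≤ mb if nb > a, and deg H_m ≤ pa + rb if nb ≤ a. -/
/-!
Expanding the recurrence, `H_m` is a combination of products `A^i B^j` with `n i + j = m`, so the
degree of `H_m` is at most the largest `i a + j b` over such pairs. Trading one `A` for `n` copies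
of `B` changes this weight by `n b - a`: when `n b > a` the maximum is `m b` (all `B`), otherwise
it is `p a + r b` (as many `A` as possible). Formally, any weight `d` with `d k ≥ k b` for `k < n`
that grows by at least `b` per step and by at least `a` per `n` steps bounds `deg H_k`, by strong
induction, and both weights have these properties in their respective ranges.
-/

open Polynomial

theorem natDegree_le_of_recurrence {R : Type*} [Ring R] {n a b : ℕ} (hn : 0 < n)
    {A B : R[X]} {H : ℕ → R[X]} (hinit : ∀ m < n, H m = (-1) ^ m * B ^ m)
    (hrec : ∀ m, n ≤ m → H m = -(B * H (m - 1)) - A * H (m - n))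
    (hA : A.natDegree ≤ a) (hB : B.natDegree ≤ b) {d : ℕ → ℕ}
    (hd_init : ∀ k < n, k * b ≤ d k) (hd_succ : ∀ k, n ≤ k + 1 → b + d k ≤ d (k + 1))
    (hd_add : ∀ k, a + d k ≤ d (k + n)) (m : ℕ) : (H m).natDegree ≤ d m := by
  induction m using Nat.strong_induction_on with
  | _ m ih =>
    rcases lt_or_ge m n with hm | hm
    · rw [hinit m hm, ← neg_pow]
      exact (natDegree_pow_le_of_le m (natDegree_neg B ▸ hB)).trans (hd_init m hm)
    obtain ⟨j, rfl⟩ : ∃ j, m = j + 1 := ⟨m - 1, by omega⟩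
    obtain ⟨i, hi⟩ : ∃ i, j + 1 = i + n := ⟨j + 1 - n, by omega⟩
    have hB_step : (B * H j).natDegree ≤ d (j + 1) :=
      (natDegree_mul_le_of_le hB (ih j (by omega))).trans (hd_succ j hm)
    have hA_step : (A * H i).natDegree ≤ d (j + 1) :=
      hi ▸ (natDegree_mul_le_of_le hA (ih i (by omega))).trans (hd_add i)
    rw [hrec _ hm, Nat.add_sub_cancel, show j + 1 - n = i by omega]
    exact (natDegree_sub_le_of_le ((natDegree_neg _).le.trans hB_step) hA_step).trans_eq
      (max_self _)

theorem add_div_mul_add_mod_mul_le_succ {n a b : ℕ} (hab : n * b ≤ a) (k : ℕ) :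
    b + (k / n * a + k % n * b) ≤ (k + 1) / n * a + (k + 1) % n * b := by
  rcases Nat.eq_zero_or_pos n with rfl | hn
  · simp only [Nat.div_zero, Nat.mod_zero]
    nlinarith
  obtain ⟨q, r, hr, rfl⟩ : ∃ q r, r < n ∧ k = n * q + r :=
    ⟨k / n, k % n, Nat.mod_lt k hn, (Nat.div_add_mod k n).symm⟩
  rcases lt_or_eq_of_le (show r + 1 ≤ n from hr) with hr' | hr'
  · rw [add_assoc, Nat.mul_add_div hn, Nat.mul_add_div hn, Nat.mul_add_mod, Nat.mul_add_mod,
      Nat.div_eq_of_lt hr, Nat.div_eq_of_lt hr', Nat.mod_eq_of_lt hr, Nat.mod_eq_of_lt hr']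
    nlinarith
  · rw [add_assoc, hr', ← mul_add_one, Nat.mul_add_div hn, Nat.mul_div_cancel_left _ hn,
      Nat.mul_mod_right, Nat.div_eq_of_lt hr, Nat.mul_add_mod, Nat.mod_eq_of_lt hr]
    have : b + r * b = n * b := by rw [← hr']; ring
    nlinarith

theorem stmt_7_general (n : ℕ) (A B : Polynomial ℂ) (H : ℕ → Polynomial ℂ)
    (hinit : ∀ m < n, H m = (-1) ^ m * B ^ m)
    (hrec : ∀ m, n ≤ m → H m = -(B * H (m - 1)) - A * H (m - n))
    (a b : ℕ) (ha : A.natDegree = a) (hb : B.natDegree = b)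
    (m p r : ℕ) (hm : m = n * p + r) (hr : r < n) :
    (n * b > a → (H m).natDegree ≤ m * b) ∧
    (n * b ≤ a → (H m).natDegree ≤ p * a + r * b) := by
  have hn : 0 < n := by omega
  refine ⟨fun hab => ?_, fun hab => ?_⟩
  · exact natDegree_le_of_recurrence hn hinit hrec ha.le hb.le (fun _ _ => le_rfl)
      (fun k _ => by nlinarith) (fun k => by nlinarith) m
  · have hpr : m / n * a + m % n * b = p * a + r * b := by
      rw [hm, Nat.mul_add_div hn, Nat.mul_add_mod, Nat.div_eq_of_lt hr, Nat.mod_eq_of_lt hr,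
        add_zero]
    refine hpr ▸ natDegree_le_of_recurrence (d := fun k => k / n * a + k % n * b) hn hinit hrec
      ha.le hb.le (fun k hk => ?_) (fun k _ => add_div_mul_add_mod_mul_le_succ hab k)
      (fun k => ?_) m
    · simp [Nat.div_eq_of_lt hk, Nat.mod_eq_of_lt hk]
    · rw [Nat.add_div_right _ hn, Nat.add_mod_right]
      ring_nf
      omega

theorem stmt_7 (n : ℕ) (hn : 2 ≤ n) (A B : Polynomial ℂ) (H : ℕ → Polynomial ℂ)
    (hinit : ∀ m < n, H m = (-1) ^ m * B ^ m)
    (hrec : ∀ m, n ≤ m → H m = -(B * H (m - 1)) - A * H (m - n))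
    (a b : ℕ) (ha : A.natDegree = a) (hb : B.natDegree = b)
    (m p r : ℕ) (hm : m = n * p + r) (hr : r < n) :
    (n * b > a → (H m).natDegree ≤ m * b) ∧
    (n * b ≤ a → (H m).natDegree ≤ p * a + r * b) :=
  stmt_7_general n A B H hinit hrec a b ha hb m p r hm hr
end

section
/- Let n ≥ 2 and 0 < θ < π/n. Then 0 < sin^n(nθ) / (sin θ · sin^{n−1}((n−1)θ)) ≤ n^n/(n−1)^{n−1}. -/
/-!
Concavity of `sin` on `[0, π]` makes `sin x / x` nonincreasing there, so for `0 < a ≤ b < π`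
we get `sin b / sin a ≤ b / a`. Writing the quotient as
`(sin nθ / sin θ) * (sin nθ / sin (n-1)θ) ^ (n-1)` and applying this twice bounds it by
`n * (n / (n-1)) ^ (n-1)`.
-/

open Real

/-- The chord from `0` to `b` lies below the graph of `sin` on `[0, b]`. -/
lemma Real.mul_sin_le_mul_sin {a b : ℝ} (ha : 0 ≤ a) (hab : a ≤ b) (hb : b ≤ π) :
    a * sin b ≤ b * sin a := by
  rcases (ha.trans hab).eq_or_lt with rfl | hb0
  · simp [le_antisymm hab ha]
  have hconc := strictConcaveOn_sin_Icc.concaveOn.2 (⟨ha.trans hab, hb⟩ : b ∈ Set.Icc 0 π)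
    (⟨le_rfl, pi_pos.le⟩ : (0 : ℝ) ∈ Set.Icc 0 π) (div_nonneg ha hb0.le)
    (sub_nonneg.2 (div_le_one_of_le₀ hab hb0.le)) (add_sub_cancel _ _)
  simp only [smul_eq_mul, mul_zero, sin_zero, add_zero, div_mul_cancel₀ _ hb0.ne'] at hconc
  calc a * sin b = b * (a / b * sin b) := by field_simp
    _ ≤ b * sin a := mul_le_mul_of_nonneg_left hconc hb0.le

lemma Real.sin_div_sin_le_div {a b : ℝ} (ha : 0 < a) (hab : a ≤ b) (hb : b < π) :
    sin b / sin a ≤ b / a := by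
  rw [div_le_div_iff₀ (sin_pos_of_pos_of_lt_pi ha (hab.trans_lt hb)) ha, mul_comm]
  exact mul_sin_le_mul_sin ha.le hab hb.le

theorem stmt_9 (n : ℕ) (hn : 2 ≤ n) (θ : ℝ) (hθ0 : 0 < θ) (hθ1 : θ < Real.pi / n) :
    0 < (Real.sin (n * θ)) ^ n / (Real.sin θ * (Real.sin ((n - 1 : ℕ) * θ)) ^ (n - 1)) ∧
    (Real.sin (n * θ)) ^ n / (Real.sin θ * (Real.sin ((n - 1 : ℕ) * θ)) ^ (n - 1))
      ≤ (n : ℝ) ^ n / ((n : ℝ) - 1) ^ (n - 1) := by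
  obtain ⟨m, rfl⟩ : ∃ m, n = m + 1 := ⟨n - 1, by omega⟩
  simp only [Nat.add_sub_cancel]
  set N : ℝ := ((m + 1 : ℕ) : ℝ) with hN
  have hm : (0 : ℝ) < m := by exact_mod_cast (by omega : 0 < m)
  have hNθ : N * θ < π := by rwa [lt_div_iff₀ (by positivity), mul_comm] at hθ1
  have hθ : θ ≤ N * θ := le_mul_of_one_le_left hθ0.le (by simp [hN])
  have hmθ : m * θ ≤ N * θ := by gcongr; simp [hN]
  have hsin_pos {x : ℝ} (hx0 : 0 < x) (hx : x ≤ N * θ) : 0 < sin x :=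
    sin_pos_of_pos_of_lt_pi hx0 (hx.trans_lt hNθ)
  have hsinNθ := hsin_pos (by positivity) le_rfl
  have hsinθ := hsin_pos hθ0 hθ
  have hsinmθ := hsin_pos (by positivity) hmθ
  have hfirst : sin (N * θ) / sin θ ≤ N := by
    simpa [hθ0.ne'] using sin_div_sin_le_div hθ0 hθ hNθ
  have hsecond : sin (N * θ) / sin (m * θ) ≤ N / m := by
    simpa [mul_div_mul_right _ _ hθ0.ne'] using sin_div_sin_le_div (by positivity) hmθ hNθ
  rw [show sin (N * θ) ^ (m + 1) / (sin θ * sin (m * θ) ^ m) =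
      sin (N * θ) / sin θ * (sin (N * θ) / sin (m * θ)) ^ m by ring]
  refine ⟨by positivity, ?_⟩
  calc _ ≤ N * (N / m) ^ m := by gcongr
    _ = N ^ (m + 1) / (N - 1) ^ m := by rw [show N - 1 = m by simp [hN], div_pow]; ring
end

section
/- For every integer n ≥ 2 and real θ ∈ (0, π/n), (n−1) sin(nθ) ≤ n sin((n−1)θ). -/
/-!
Write `n = m + 1`. By the addition formula, `sin (n θ) = sin (m θ) cos θ + cos (m θ) sin θ`;
since `cos θ ≤ 1` and `sin (m θ) ≥ 0`, it suffices that `m cos (m θ) sin θ ≤ sin (m θ)`.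
This follows from `sin θ ≤ θ` together with `x cos x ≤ sin x` on `[0, π]`, i.e. `x ≤ tan x`
where the cosine is positive.
-/

open Real

namespace Real

theorem mul_cos_le_sin {x : ℝ} (hx₀ : 0 ≤ x) (hxπ : x ≤ π) : x * cos x ≤ sin x := by
  rcases lt_or_ge x (π / 2) with hx | hx
  · have hcos : 0 < cos x := cos_pos_of_mem_Ioo ⟨by linarith [pi_pos], hx⟩
    have htan := le_tan hx₀ hx
    rwa [tan_eq_sin_div_cos, le_div_iff₀ hcos] at htan
  · have hcos : cos x ≤ 0 := cos_nonpos_of_pi_div_two_le_of_le hx (by linarith [pi_pos])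
    calc x * cos x ≤ 0 := mul_nonpos_of_nonneg_of_nonpos hx₀ hcos
      _ ≤ sin x := sin_nonneg_of_nonneg_of_le_pi hx₀ hxπ

theorem mul_cos_mul_mul_sin_le_sin_mul {m θ : ℝ} (hm : 1 ≤ m) (hθ : 0 ≤ θ) (hmθ : m * θ ≤ π) :
    m * cos (m * θ) * sin θ ≤ sin (m * θ) := by
  rcases le_or_gt (cos (m * θ)) 0 with hcos | hcos
  · calc m * cos (m * θ) * sin θ ≤ 0 :=
          mul_nonpos_of_nonpos_of_nonneg (mul_nonpos_of_nonneg_of_nonpos (by linarith) hcos)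
            (sin_nonneg_of_nonneg_of_le_pi hθ (by nlinarith))
      _ ≤ sin (m * θ) := sin_nonneg_of_nonneg_of_le_pi (by positivity) hmθ
  · calc m * cos (m * θ) * sin θ ≤ m * cos (m * θ) * θ := by gcongr; exact sin_le hθ
      _ = m * θ * cos (m * θ) := by ring
      _ ≤ sin (m * θ) := mul_cos_le_sin (by positivity) hmθ

theorem mul_sin_add_one_mul_le {m θ : ℝ} (hm : 1 ≤ m) (hθ : 0 ≤ θ) (hmθ : m * θ ≤ π) :
    m * sin ((m + 1) * θ) ≤ (m + 1) * sin (m * θ) := by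
  have hsin : 0 ≤ sin (m * θ) := sin_nonneg_of_nonneg_of_le_pi (by positivity) hmθ
  have hcos : m * sin (m * θ) * cos θ ≤ m * sin (m * θ) :=
    mul_le_of_le_one_right (by positivity) (cos_le_one θ)
  have hkey := mul_cos_mul_mul_sin_le_sin_mul hm hθ hmθ
  calc m * sin ((m + 1) * θ) = m * sin (m * θ) * cos θ + m * cos (m * θ) * sin θ := by
        rw [add_mul, one_mul, sin_add]; ring
    _ ≤ (m + 1) * sin (m * θ) := by linarith

end Real

theorem stmt_11 (n : ℕ) (hn : 2 ≤ n) (θ : ℝ) (hθ0 : 0 < θ) (hθ1 : θ < Real.pi / n) :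
    ((n : ℝ) - 1) * Real.sin (n * θ) ≤ n * Real.sin ((n - 1 : ℕ) * θ) := by
  have hn0 : (0 : ℝ) < n := by positivity
  have hm : (1 : ℝ) ≤ n - 1 := by
    have : (2 : ℝ) ≤ n := by exact_mod_cast hn
    linarith
  have hnθ : n * θ < π := by rwa [lt_div_iff₀ hn0, mul_comm] at hθ1
  have hmθ : ((n : ℝ) - 1) * θ ≤ π := by nlinarith
  have h := Real.mul_sin_add_one_mul_le hm hθ0.le hmθ
  rw [sub_add_cancel] at h
  rwa [Nat.cast_sub (by omega), Nat.cast_one]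
end

section
/- Let n ≥ 2 and 0 < θ < π/n. The roots of P_θ(ζ) = ζ^n − (sin nθ / sin θ) ζ + sin((n−1)θ)/sin θ are distinct (P_θ is separable). -/
/-!
A common root `z` of `P = X^(m+1) - a X + b` and `P' = (m+1) X^m - a` satisfies
`m a z = (m+1) b`, and eliminating `z` gives the vanishing of the trinomial discriminant,
`m^m a^(m+1) = (m+1)^(m+1) b^m`. For `P_θ` we have `a = sin((m+1)θ) / sin θ` and
`b = sin(mθ) / sin θ`; strict concavity of `sin` on `[0, π]` makes `t ↦ sin t / t` strictly
decreasing there, which gives `a < m+1` and `m a < (m+1) b`, hence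
`m^m a^(m+1) = (m a)^m a < ((m+1) b)^m (m+1)`.
-/

open Polynomial

theorem trinomial_discr_eq_zero_of_common_root {R : Type*} [CommRing R] {m : ℕ} {a b z : R}
    (hP : z ^ (m + 1) - a * z + b = 0) (hP' : (m + 1) * z ^ m - a = 0) :
    (m : R) ^ m * a ^ (m + 1) = (m + 1) ^ (m + 1) * b ^ m := by
  have hz : m * a * z = (m + 1) * b := by linear_combination z * hP' - (m + 1) * hP
  have hzm : (m : R) ^ m * a ^ m * z ^ m = (m + 1) ^ m * b ^ m := by
    rw [← mul_pow, ← mul_pow, ← mul_pow, hz]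
  linear_combination -((m : R) ^ m * a ^ m) * hP' + (m + 1) * hzm

theorem separable_X_pow_sub_C_mul_X_add_C {K : Type*} [Field K] [IsAlgClosed K] {m : ℕ}
    {a b : K} (h : (m : K) ^ m * a ^ (m + 1) ≠ (m + 1) ^ (m + 1) * b ^ m) :
    (X ^ (m + 1) - C a * X + C b).Separable := by
  rw [separable_def, isCoprime_iff_aeval_ne_zero_of_isAlgClosed (k := K) K]
  refine fun z ↦ not_and_or.mp fun ⟨hP, hP'⟩ ↦ h ?_
  simp only [derivative_X_pow, derivative_C_mul_X, derivative_C, add_zero, map_add, map_sub,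
    map_mul, map_pow, aeval_X, aeval_C, map_natCast, Algebra.algebraMap_self_apply] at hP hP'
  push_cast at hP'
  exact trinomial_discr_eq_zero_of_common_root hP hP'

theorem trinomial_discr_lt {m : ℕ} (hm : m ≠ 0) {a b : ℝ} (ha : 0 ≤ a) (ha' : a < m + 1)
    (hab : m * a < (m + 1) * b) :
    (m : ℝ) ^ m * a ^ (m + 1) < (m + 1) ^ (m + 1) * b ^ m :=
  calc (m : ℝ) ^ m * a ^ (m + 1) = (m * a) ^ m * a := by ring
    _ < ((m + 1) * b) ^ m * (m + 1) :=
      mul_lt_mul'' (pow_lt_pow_left₀ hab (by positivity) hm) ha' (by positivity) ha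
    _ = (m + 1) ^ (m + 1) * b ^ m := by rw [mul_pow]; ring

theorem Real.sin_div_lt_sin_div {s t : ℝ} (hs : 0 < s) (hst : s < t) (ht : t ≤ Real.pi) :
    Real.sin t / t < Real.sin s / s := by
  have ht0 : 0 < t := hs.trans hst
  simpa using strictConcaveOn_sin_Icc.secant_strict_mono ⟨le_rfl, Real.pi_pos.le⟩
    ⟨hs.le, hst.le.trans ht⟩ ⟨ht0.le, ht⟩ hs.ne' ht0.ne' hst

theorem Real.mul_sin_mul_lt {k l θ : ℝ} (hk : 0 < k) (hkl : k < l) (hθ : 0 < θ)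
    (hlθ : l * θ ≤ Real.pi) : k * Real.sin (l * θ) < l * Real.sin (k * θ) := by
  have h := Real.sin_div_lt_sin_div (mul_pos hk hθ) (mul_lt_mul_of_pos_right hkl hθ) hlθ
  rw [div_lt_div_iff₀ (by nlinarith) (by positivity)] at h
  nlinarith

theorem stmt_13 (n : ℕ) (hn : 2 ≤ n) (θ : ℝ) (hθ0 : 0 < θ) (hθ1 : θ < Real.pi / n) :
    (X ^ n - C ((Real.sin (n * θ) / Real.sin θ : ℝ) : ℂ) * X
      + C ((Real.sin ((n - 1 : ℕ) * θ) / Real.sin θ : ℝ) : ℂ)).Separable := by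
  obtain ⟨m, rfl⟩ : ∃ m, n = m + 1 := ⟨n - 1, by omega⟩
  have hm : m ≠ 0 := by omega
  rw [Nat.add_sub_cancel]
  push_cast at hθ1 ⊢
  have hnθ : (m + 1) * θ < Real.pi := by rwa [lt_div_iff₀ (by positivity), mul_comm] at hθ1
  have hsin : 0 < Real.sin θ := Real.sin_pos_of_pos_of_lt_pi hθ0 (by nlinarith)
  have ha : 0 ≤ Real.sin ((m + 1) * θ) / Real.sin θ :=
    div_nonneg (Real.sin_nonneg_of_nonneg_of_le_pi (by positivity) hnθ.le) hsin.le
  have ha' : Real.sin ((m + 1) * θ) / Real.sin θ < m + 1 := by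
    rw [div_lt_iff₀ hsin]
    simpa using Real.mul_sin_mul_lt one_pos (by simpa [Nat.pos_iff_ne_zero]) hθ0 hnθ.le
  have hab :
      m * (Real.sin ((m + 1) * θ) / Real.sin θ) < (m + 1) * (Real.sin (m * θ) / Real.sin θ) := by
    rw [← mul_div_assoc, ← mul_div_assoc]
    exact div_lt_div_of_pos_right
      (Real.mul_sin_mul_lt (by positivity) (lt_add_one _) hθ0 hnθ.le) hsin
  apply separable_X_pow_sub_C_mul_X_add_C
  exact_mod_cast (trinomial_discr_lt hm ha ha' hab).ne
end

section
/- Let n ≥ 3 and 0 ≤ θ < π/n. Every root ζ of P_θ(ζ) = ζ^n − (sin nθ / sin θ) ζ + sin((n−1)θ)/sin θ other than e^{iθ} and e^{−iθ} satisfies |ζ| > 1 (with the convention sin nθ/sin θ = n and sin(n−1)θ/sin θ = n−1 when θ = 0). -/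
/-!
Put `s k = U_{k-1}(cos θ) = sin kθ / sin θ`, so that the polynomial is `q_{n-1}` in the family
`q_m(z) = z^(m+1) - s_{m+1} z + s_m`, whose first member `q_1 = z² - 2 z cos θ + 1` vanishes
exactly at `e^{± iθ}`. Let `r_m(z) = z^(m+1) q_m(1/z)` be the reversed polynomial. Cassini's
identity `s_{m+1}² - s_m s_{m+2} = 1` gives the Schur–Cohn step
`s_m q_{m+1} = s_{m+1} q_m + z r_m`, `s_m r_{m+1} = q_m + s_{m+1} z r_m`, and for `a > 1` the map
`(X, Y) ↦ (aX + Y, X + aY)` preserves `|Y| ≤ |X|, X ≠ 0`. As `nθ < π`, the `s_k` with `k ≤ n` are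
positive, hence `s_{m+1} > 1` along the way, and the invariant `q_m(z) ≠ 0, |r_m(z)| ≤ |q_m(z)|`
propagates from `m = 1` (where `r_1 = q_1`) to `m = n - 1` for every `z ≠ e^{± iθ}` with `|z| ≤ 1`.
-/

open Complex

namespace Polynomial.Chebyshev

theorem U_sq_sub_U_mul_U (R : Type*) [CommRing R] (n : ℤ) :
    U R n ^ 2 - U R (n - 1) * U R (n + 1) = 1 := by
  have step (i : ℤ) : U R (i + 1) ^ 2 - U R (i + 1 - 1) * U R (i + 1 + 1)
      = U R i ^ 2 - U R (i - 1) * U R (i + 1) := by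
    rw [add_sub_cancel_right, add_assoc, one_add_one_eq_two, U_add_two, U_sub_one]
    ring
  induction n using Int.induction_on with
  | zero => simp
  | succ i ih => rw [step, ih]
  | pred i ih => rw [← ih, ← step, sub_add_cancel]

theorem U_real_cos_sub_one_eq {θ : ℝ} (hθ : Real.sin θ ≠ 0) (k : ℕ) :
    (U ℝ (k - 1)).eval (Real.cos θ) = Real.sin (k * θ) / Real.sin θ := by
  rw [eq_div_iff hθ, U_real_cos]
  push_cast
  ring_nf

theorem U_real_cos_sub_one_eq_ite {θ : ℝ} (hθ₀ : 0 ≤ θ) (hθπ : θ < Real.pi) (k : ℕ) :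
    (U ℝ (k - 1)).eval (Real.cos θ) =
      if θ = 0 then (k : ℝ) else Real.sin (k * θ) / Real.sin θ := by
  split_ifs with hθ
  · simp [hθ, U_eval_one]
  · exact U_real_cos_sub_one_eq (Real.sin_pos_of_pos_of_lt_pi (by positivity) hθπ).ne' k

theorem U_real_cos_sub_one_pos {θ : ℝ} (hθ₀ : 0 ≤ θ) {k : ℕ} (hk : 1 ≤ k)
    (hkθ : k * θ < Real.pi) : 0 < (U ℝ (k - 1)).eval (Real.cos θ) := by
  have hk' : (1 : ℝ) ≤ k := by exact_mod_cast hk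
  have hθπ : θ < Real.pi := by nlinarith
  rw [U_real_cos_sub_one_eq_ite hθ₀ hθπ]
  split_ifs with hθ
  · positivity
  · have hθ' : 0 < θ := lt_of_le_of_ne hθ₀ (Ne.symm hθ)
    exact div_pos (Real.sin_pos_of_pos_of_lt_pi (by positivity) hkθ)
      (Real.sin_pos_of_pos_of_lt_pi hθ' hθπ)

end Polynomial.Chebyshev

section Schur

variable {E : Type*} [NormedAddCommGroup E] [InnerProductSpace ℝ E]

theorem norm_add_smul_le_norm_smul_add {x y : E} {a : ℝ} (ha : 1 ≤ a) (h : ‖y‖ ≤ ‖x‖) :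
    ‖x + a • y‖ ≤ ‖a • x + y‖ := by
  have key : ‖a • x + y‖ ^ 2 - ‖x + a • y‖ ^ 2 = (a ^ 2 - 1) * (‖x‖ ^ 2 - ‖y‖ ^ 2) := by
    rw [norm_add_sq_real, norm_add_sq_real, norm_smul, norm_smul, real_inner_smul_left,
      real_inner_smul_right, Real.norm_eq_abs, abs_of_nonneg (by linarith)]
    ring
  have : 0 ≤ (a ^ 2 - 1) * (‖x‖ ^ 2 - ‖y‖ ^ 2) :=
    mul_nonneg (by nlinarith) (sub_nonneg.2 (pow_le_pow_left₀ (norm_nonneg _) h 2))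
  exact (pow_le_pow_iff_left₀ (norm_nonneg _) (norm_nonneg _) two_ne_zero).1 (by linarith)

theorem smul_add_ne_zero {x y : E} {a : ℝ} (ha : 1 < a) (h : ‖y‖ ≤ ‖x‖) (hx : x ≠ 0) :
    a • x + y ≠ 0 := by
  rw [← norm_pos_iff]
  calc 0 < (a - 1) * ‖x‖ := mul_pos (by linarith) (norm_pos_iff.2 hx)
    _ ≤ ‖a • x‖ - ‖-y‖ := by
      rw [norm_smul, norm_neg, Real.norm_eq_abs, abs_of_pos (by linarith)]; linarith
    _ ≤ ‖a • x + y‖ := by simpa using norm_sub_norm_le (a • x) (-y)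

end Schur

section Trinomial

variable (s : ℕ → ℝ)

noncomputable def trinomial (m : ℕ) (z : ℂ) : ℂ := z ^ (m + 1) - s (m + 1) * z + s m

noncomputable def trinomialRev (m : ℕ) (z : ℂ) : ℂ :=
  1 - s (m + 1) * z ^ m + s m * z ^ (m + 1)

variable {s}

theorem mul_trinomial_succ {m : ℕ} (h : s (m + 1) ^ 2 - s m * s (m + 2) = 1) (z : ℂ) :
    s m * trinomial s (m + 1) z = s (m + 1) • trinomial s m z + z * trinomialRev s m z := by
  have h' : (s (m + 1) : ℂ) ^ 2 - s m * s (m + 2) = 1 := by exact_mod_cast h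
  simp only [trinomial, trinomialRev, real_smul]
  linear_combination z * h'

theorem mul_trinomialRev_succ {m : ℕ} (h : s (m + 1) ^ 2 - s m * s (m + 2) = 1) (z : ℂ) :
    s m * trinomialRev s (m + 1) z = trinomial s m z + s (m + 1) • (z * trinomialRev s m z) := by
  have h' : (s (m + 1) : ℂ) ^ 2 - s m * s (m + 2) = 1 := by exact_mod_cast h
  simp only [trinomial, trinomialRev, real_smul]
  linear_combination z ^ (m + 1) * h'

theorem trinomial_ne_zero_and_norm_trinomialRev_le
    (hs : ∀ m, s (m + 1) ^ 2 - s m * s (m + 2) = 1) (hs₁ : s 1 = 1)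
    {z : ℂ} (hz : ‖z‖ ≤ 1) (hz₁ : trinomial s 1 z ≠ 0) (m : ℕ)
    (hpos : ∀ k, 1 ≤ k → k ≤ m + 2 → 0 < s k) :
    trinomial s (m + 1) z ≠ 0 ∧ ‖trinomialRev s (m + 1) z‖ ≤ ‖trinomial s (m + 1) z‖ := by
  induction m with
  | zero =>
    refine ⟨hz₁, le_of_eq ?_⟩
    simp only [trinomial, trinomialRev, hs₁]
    congr 1
    push_cast
    ring
  | succ m ih =>
    obtain ⟨hq, hr⟩ := ih fun k hk hkm => hpos k hk (by omega)
    have hs₀ : 0 < s (m + 1) := hpos _ (by omega) (by omega)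
    have ha : 1 < s (m + 2) := by
      nlinarith [hs (m + 1), hpos (m + 2) (by omega) (by omega), hpos (m + 3) (by omega) le_rfl]
    have hzr : ‖z * trinomialRev s (m + 1) z‖ ≤ ‖trinomial s (m + 1) z‖ := by
      rw [norm_mul]
      exact (mul_le_of_le_one_left (norm_nonneg _) hz).trans hr
    have hnorm (w : ℂ) : ‖(s (m + 1) : ℂ) * w‖ = s (m + 1) * ‖w‖ := by
      rw [norm_mul, norm_real, Real.norm_of_nonneg hs₀.le]
    constructor
    · intro h0
      apply smul_add_ne_zero ha hzr hq
      rw [← mul_trinomial_succ (hs _), h0, mul_zero]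
    · refine le_of_mul_le_mul_left ?_ hs₀
      rw [← hnorm, ← hnorm, mul_trinomial_succ (hs _), mul_trinomialRev_succ (hs _)]
      exact norm_add_smul_le_norm_smul_add ha.le hzr

theorem pow_sub_mul_add_ne_zero
    (hs : ∀ m, s (m + 1) ^ 2 - s m * s (m + 2) = 1) (hs₁ : s 1 = 1)
    {n : ℕ} (hn : 2 ≤ n) (hpos : ∀ k, 1 ≤ k → k ≤ n → 0 < s k)
    {z : ℂ} (hz : ‖z‖ ≤ 1) (hz₁ : z ^ 2 - s 2 * z + s 1 ≠ 0) :
    z ^ n - s n * z + s (n - 1) ≠ 0 := by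
  obtain ⟨m, rfl⟩ := Nat.exists_eq_add_of_le' hn
  exact (trinomial_ne_zero_and_norm_trinomialRev_le hs hs₁ hz hz₁ m hpos).1

end Trinomial

theorem Complex.sq_sub_two_cos_mul_add_one (w z : ℂ) :
    z ^ 2 - 2 * cos w * z + 1 = (z - exp (w * I)) * (z - exp (-w * I)) := by
  have hprod : exp (w * I) * exp (-w * I) = 1 := by rw [← exp_add]; simp
  rw [two_cos]
  linear_combination -hprod

open Polynomial.Chebyshev in
theorem stmt_15 (n : ℕ) (hn : 3 ≤ n) (θ : ℝ) (hθ0 : 0 ≤ θ) (hθ1 : θ < Real.pi / n)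
    (c1 c2 : ℝ)
    (hc1 : c1 = if θ = 0 then (n : ℝ) else Real.sin (n * θ) / Real.sin θ)
    (hc2 : c2 = if θ = 0 then ((n : ℝ) - 1) else Real.sin ((n - 1 : ℕ) * θ) / Real.sin θ) :
    ∀ ζ : ℂ, ζ ^ n - (c1 : ℂ) * ζ + (c2 : ℂ) = 0 →
      ζ ≠ Complex.exp ((θ : ℂ) * I) → ζ ≠ Complex.exp (-(θ : ℂ) * I) →
      1 < ‖ζ‖ := by
  intro ζ hζ hne₁ hne₂
  by_contra! hζ₁
  set s : ℕ → ℝ := fun k ↦ (U ℝ (k - 1)).eval (Real.cos θ) with hs_def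
  have hnθ : n * θ < Real.pi := by
    rwa [lt_div_iff₀ (by positivity), mul_comm] at hθ1
  have hθπ : θ < Real.pi := by
    have : (1 : ℝ) ≤ n := by exact_mod_cast (by omega : 1 ≤ n)
    nlinarith
  have hs : ∀ m, s (m + 1) ^ 2 - s m * s (m + 2) = 1 := fun m ↦ by
    simpa [hs_def, add_sub_assoc] using
      congrArg (Polynomial.eval (Real.cos θ)) (U_sq_sub_U_mul_U ℝ m)
  have hpos : ∀ k, 1 ≤ k → k ≤ n → 0 < s k := fun k hk hkn ↦
    U_real_cos_sub_one_pos hθ0 hk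
      (lt_of_le_of_lt (mul_le_mul_of_nonneg_right (by exact_mod_cast hkn) hθ0) hnθ)
  have hc1 : c1 = s n := hc1.trans (U_real_cos_sub_one_eq_ite hθ0 hθπ n).symm
  have hc2 : c2 = s (n - 1) := by
    rw [hc2, ← Nat.cast_pred (by omega)]
    exact (U_real_cos_sub_one_eq_ite hθ0 hθπ (n - 1)).symm
  have hD : ζ ^ 2 - s 2 * ζ + s 1 ≠ 0 := by
    have : s 2 = 2 * Real.cos θ ∧ s 1 = 1 := by simp [hs_def, U_one]
    rw [this.1, this.2]
    push_cast
    rw [sq_sub_two_cos_mul_add_one]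
    exact mul_ne_zero (sub_ne_zero.2 hne₁) (sub_ne_zero.2 hne₂)
  rw [hc1, hc2] at hζ
  exact pow_sub_mul_add_ne_zero hs (by simp [hs_def]) (by omega) hpos hζ₁ hD hζ
end

section
/- Let n ≥ 2 and let q = e^{2iθ} with θ ∈ ℝ, sin θ ≠ 0, and suppose q_1 = q, q_2, ..., q_{n−1} are complex numbers such that, setting q_0 = 1, the k-th elementary symmetric polynomial of (q_0, ..., q_{n−1}) vanishes for 1 ≤ k ≤ n−2. Then for each 2 ≤ k ≤ n−1, the number ζ_k = e^{−iθ} q_k is a root of P_θ(ζ) = ζ^n − (sin nθ / sin θ) ζ + sin((n−1)θ)/sin θ. -/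
/-!
By Vieta's formulas, the vanishing of `e_1, …, e_{n-2}` says that `∏ (X - q_i)` is a trinomial
`X ^ n + b X + c`. Since `1` and `q` are among its roots, `b` and `c` can be eliminated, so every
root `w` satisfies `(q - 1) w ^ n - (q ^ n - 1) w + (q ^ n - q) = 0`. With `q = E ^ 2`,
`E = exp (iθ)`, each `E ^ (2j) - 1` equals `2i E ^ j sin (jθ)`, so substituting `w = E ζ` turns this
relation into `2i E ^ (n+1) (sin θ ζ ^ n - sin (nθ) ζ + sin ((n-1)θ)) = 0`.
-/

open Complex Polynomial

theorem Multiset.prod_X_sub_C_eq_trinomial {R : Type*} [CommRing R] (s : Multiset R) (m : ℕ)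
    (hcard : Multiset.card s = m + 2) (hesymm : ∀ k, 1 ≤ k → k ≤ m → s.esymm k = 0) :
    (s.map fun t => X - C t).prod =
      X ^ (m + 2) + C ((-1) ^ (m + 1) * s.esymm (m + 1)) * X + C ((-1) ^ m * s.esymm (m + 2)) := by
  have hmiddle : ∑ i ∈ Finset.range m,
      (-1) ^ (i + 1) * (C (s.esymm (i + 1)) * X ^ (m + 2 - (i + 1))) = 0 :=
    Finset.sum_eq_zero fun i hi => by
      rw [hesymm (i + 1) (by omega) (by simpa using hi), C_0, zero_mul, mul_zero]
  have hesymm_zero : s.esymm 0 = 1 := by simp [Multiset.esymm]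
  rw [prod_X_sub_X_eq_sum_esymm, hcard, Finset.sum_range_succ, Finset.sum_range_succ,
    Finset.sum_range_succ', hmiddle, hesymm_zero, show m + 2 - (m + 1) = 1 by omega]
  simp only [C_1, map_mul, map_pow, map_neg, Nat.sub_self, Nat.sub_zero]
  ring

theorem Multiset.pow_add_esymm_mul_add_esymm_eq_zero_of_mem {R : Type*} [CommRing R]
    {s : Multiset R} {m : ℕ} (hcard : Multiset.card s = m + 2)
    (hesymm : ∀ k, 1 ≤ k → k ≤ m → s.esymm k = 0) {r : R} (hr : r ∈ s) :
    r ^ (m + 2) + (-1) ^ (m + 1) * s.esymm (m + 1) * r + (-1) ^ m * s.esymm (m + 2) = 0 := by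
  have hroot : (s.map fun t => X - C t).prod.eval r = 0 := by
    rw [eval_multiset_prod]
    exact Multiset.prod_eq_zero (Multiset.mem_map.2 ⟨_, Multiset.mem_map.2 ⟨r, hr, rfl⟩, by simp⟩)
  simpa [s.prod_X_sub_C_eq_trinomial m hcard hesymm] using hroot

theorem sub_one_mul_pow_sub_of_trinomial_roots {R : Type*} [CommRing R] {n : ℕ} {b c q w : R}
    (h1 : 1 + b + c = 0) (hq : q ^ n + b * q + c = 0) (hw : w ^ n + b * w + c = 0) :
    (q - 1) * w ^ n - (q ^ n - 1) * w + (q ^ n - q) = 0 := by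
  linear_combination (q - 1) * hw + (w - q) * h1 + (1 - w) * hq

theorem Complex.exp_two_mul_mul_I_sub_one (z : ℂ) :
    exp (2 * z * I) - 1 = 2 * I * exp (z * I) * sin z := by
  have h : exp (z * I) * exp (-z * I) = 1 := by rw [← exp_add]; ring_nf; exact exp_zero
  rw [sin, show 2 * z * I = z * I + z * I by ring, exp_add]
  linear_combination h - (exp (z * I) * exp (-z * I) - exp (z * I) ^ 2) * I_sq

theorem Complex.exp_mul_I_sq_pow_sub_one (θ : ℂ) (j : ℕ) :
    (exp (θ * I) ^ 2) ^ j - 1 = 2 * I * exp (θ * I) ^ j * sin (j * θ) := by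
  rw [← pow_mul, ← exp_nat_mul, ← exp_nat_mul]
  convert exp_two_mul_mul_I_sub_one (j * θ) using 3 <;> push_cast <;> ring_nf

theorem Complex.trinomial_exp_mul_I_eq (θ ζ : ℂ) (m : ℕ) :
    (exp (θ * I) ^ 2 - 1) * (exp (θ * I) * ζ) ^ (m + 1)
      - ((exp (θ * I) ^ 2) ^ (m + 1) - 1) * (exp (θ * I) * ζ)
      + ((exp (θ * I) ^ 2) ^ (m + 1) - exp (θ * I) ^ 2)
      = 2 * I * exp (θ * I) ^ (m + 2)
        * (sin θ * ζ ^ (m + 1) - sin ((m + 1 : ℕ) * θ) * ζ + sin (m * θ)) := by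
  have h1 := exp_mul_I_sq_pow_sub_one θ 1
  have hm1 := exp_mul_I_sq_pow_sub_one θ (m + 1)
  have hm := exp_mul_I_sq_pow_sub_one θ m
  simp only [pow_one, Nat.cast_one, one_mul] at h1
  linear_combination (exp (θ * I) ^ (m + 1) * ζ ^ (m + 1)) * h1 - exp (θ * I) * ζ * hm1
    + exp (θ * I) ^ 2 * hm

theorem sin_trinomial_eq_zero_of_exp_mul_I {θ : ℝ} (hθ : Real.sin θ ≠ 0) {m : ℕ} {w : ℂ}
    (hw : (exp (θ * I) ^ 2 - 1) * w ^ (m + 1) - ((exp (θ * I) ^ 2) ^ (m + 1) - 1) * w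
      + ((exp (θ * I) ^ 2) ^ (m + 1) - exp (θ * I) ^ 2) = 0) :
    (exp (-θ * I) * w) ^ (m + 1)
      - ((Real.sin ((m + 1 : ℕ) * θ) / Real.sin θ : ℝ) : ℂ) * (exp (-θ * I) * w)
      + ((Real.sin (m * θ) / Real.sin θ : ℝ) : ℂ) = 0 := by
  set ζ := exp (-θ * I) * w
  have hwζ : w = exp (θ * I) * ζ := by
    rw [← mul_assoc, ← exp_add, show (θ : ℂ) * I + -θ * I = 0 by ring, exp_zero, one_mul]
  rw [hwζ, trinomial_exp_mul_I_eq] at hw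
  have hsin : sin (θ : ℂ) ≠ 0 := by exact_mod_cast hθ
  have hζ : sin θ * ζ ^ (m + 1) - sin ((m + 1 : ℕ) * θ) * ζ + sin (m * θ) = 0 := by
    simpa [I_ne_zero, exp_ne_zero] using hw
  push_cast at hζ ⊢
  field_simp
  linear_combination hζ

theorem stmt_19 (n : ℕ) (hn : 2 ≤ n) (θ : ℝ) (hθ : Real.sin θ ≠ 0) (q : ℕ → ℂ)
    (hq0 : q 0 = 1) (hq1 : q 1 = Complex.exp (2 * (θ : ℂ) * I))
    (hesymm : ∀ k, 1 ≤ k → k ≤ n - 2 →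
      ∑ s ∈ Finset.powersetCard k (Finset.range n), ∏ i ∈ s, q i = 0) :
    ∀ k, 2 ≤ k → k ≤ n - 1 →
      (Complex.exp (-(θ : ℂ) * I) * q k) ^ n
        - ((Real.sin (n * θ) / Real.sin θ : ℝ) : ℂ) * (Complex.exp (-(θ : ℂ) * I) * q k)
        + ((Real.sin ((n - 1 : ℕ) * θ) / Real.sin θ : ℝ) : ℂ) = 0 := by
  intro k _ hkn
  obtain ⟨m, rfl⟩ : ∃ m, n = m + 2 := ⟨n - 2, by omega⟩
  set s := (Finset.range (m + 2)).val.map q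
  have hroot : ∀ j < m + 2, q j ^ (m + 2) + (-1) ^ (m + 1) * s.esymm (m + 1) * q j
      + (-1) ^ m * s.esymm (m + 2) = 0 := fun j hj =>
    Multiset.pow_add_esymm_mul_add_esymm_eq_zero_of_mem (by simp)
      (fun i h1 h2 => (Finset.esymm_map_val q _ i).trans (hesymm i h1 (by omega)))
      (Multiset.mem_map_of_mem q (Finset.mem_range.2 hj))
  have hq1' : q 1 = exp (θ * I) ^ 2 := by rw [hq1, ← exp_nat_mul]; push_cast; ring_nf
  have hrel := sub_one_mul_pow_sub_of_trinomial_roots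
    (by simpa [hq0] using hroot 0 (by omega)) (hroot 1 (by omega)) (hroot k (by omega))
  rw [hq1'] at hrel
  exact sin_trinomial_eq_zero_of_exp_mul_I hθ hrel
end
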